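/- arXiv:1107.3228 — 2 statements merged into one kernel-verified Lean document; each statement's English description precedes it below -/
import Mathlib

section
/- Let L > 0, α ∈ (0,1) and ρ > 0 with ρα2^{α−1} > 1, set φ(t) := L(t − ρt^{1+α}) for t ≥ 0 and t₀ := (ρ(1+α))^{−1/α}. Let t ∈ (0, t₀], let η̃₀ ∈ (0, 1/4), and set δ₀ := η̃₀ t^α / 2 and η̃ := 1 − η̃₀ t^α. Then for every r with t(1−δ₀) ≤ r ≤ t(1+δ₀) one has (1−η̃²)·φ'(r)/r + η̃²·φ''(r) ≤ −L(ρα2^{α−1} − 1)·t^{α−1}. -/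
open Set

set_option maxHeartbeats 1000000 in
/-- **Pointwise concavity estimate for the Lipschitz test function
`φ(t) = L(t − ρt^{1+α})` (key computation in Corollary 6.3 / cor_LipEst).**
Here `φ'(t) = L(1 − ρ(1+α)t^α)` and `φ''(t) = −Lρα(1+α)t^{α−1}`. With `t₀` the maximum
point of `t ↦ t − ρt^{1+α}`, `t ∈ (0, t₀]`, `η̃₀ ∈ (0,1/4)`, `δ₀ = η̃₀t^α/2` and
`η̃ = 1 − η̃₀t^α`, one has for every `r ∈ [t(1−δ₀), t(1+δ₀)]`:
`(1−η̃²)φ'(r)/r + η̃²φ''(r) ≤ −L(ρα2^{α−1} − 1)t^{α−1}`. -/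
theorem lipschitz_test_function_estimate
    (L α ρ : ℝ) (hL : 0 < L) (hα : α ∈ Ioo (0:ℝ) 1) (hρ : 0 < ρ)
    (hρα : 1 < ρ * α * 2 ^ (α - 1))
    (φ : ℝ → ℝ) (hφ : ∀ t : ℝ, 0 ≤ t → φ t = L * (t - ρ * t ^ (1 + α)))
    (t₀ : ℝ) (ht₀ : t₀ = (ρ * (1 + α)) ^ (-(1 / α)))
    (t : ℝ) (ht : t ∈ Ioc (0:ℝ) t₀)
    (eta0 : ℝ) (heta0 : eta0 ∈ Ioo (0:ℝ) (1/4))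
    (δ₀ eta_t : ℝ) (hδ₀ : δ₀ = eta0 * t ^ α / 2) (heta_t : eta_t = 1 - eta0 * t ^ α)
    (r : ℝ) (hr₁ : t * (1 - δ₀) ≤ r) (hr₂ : r ≤ t * (1 + δ₀)) :
    (1 - eta_t ^ 2) * (L * (1 - ρ * (1 + α) * r ^ α)) / r
        + eta_t ^ 2 * (-(L * ρ * α * (1 + α) * r ^ (α - 1)))
      ≤ -(L * (ρ * α * 2 ^ (α - 1) - 1) * t ^ (α - 1)) := by
  obtain ⟨hα0, hα1⟩ := hα
  obtain ⟨ht0, htt0⟩ := ht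
  obtain ⟨he0, he14⟩ := heta0
  have h1α : (0:ℝ) < 1 + α := by linarith
  have hb : 0 < ρ * (1 + α) := mul_pos hρ h1α
  have h2lt : (2:ℝ) ^ (α - 1) < 1 :=
    Real.rpow_lt_one_of_one_lt_of_neg (by norm_num) (by linarith)
  have h2pos : (0:ℝ) < (2:ℝ) ^ (α - 1) := Real.rpow_pos_of_pos (by norm_num) _
  have hρα1 : 1 < ρ * α := by nlinarith [mul_pos hρ hα0]
  -- t^α ≤ 1/(ρ(1+α))
  have ht₀α : t₀ ^ α = (ρ * (1 + α))⁻¹ := by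
    rw [ht₀, ← Real.rpow_mul hb.le, show -(1 / α) * α = -1 by field_simp,
      Real.rpow_neg_one]
  have hsle : t ^ α ≤ (ρ * (1 + α))⁻¹ := by
    rw [← ht₀α]; exact Real.rpow_le_rpow ht0.le htt0 hα0.le
  have hs0 : 0 < t ^ α := Real.rpow_pos_of_pos ht0 _
  have hsα : t ^ α < α := by
    have h1 : (ρ * (1 + α))⁻¹ < α := by
      rw [inv_lt_comm₀ hb hα0]
      nlinarith [inv_mul_cancel₀ hα0.ne', mul_pos hρ hα0]
    linarith
  have hta : t ^ (α - 1) * t = t ^ α := by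
    rw [Real.rpow_sub ht0, Real.rpow_one]; field_simp
  have htam : 0 < t ^ (α - 1) := Real.rpow_pos_of_pos ht0 _
  -- r bounds
  have hx0 : 0 < eta0 * t ^ α := mul_pos he0 hs0
  have hx4 : eta0 * t ^ α < α / 4 := by nlinarith
  have hδsmall : δ₀ < 1 / 8 := by rw [hδ₀]; nlinarith
  have hδpos : 0 < δ₀ := by rw [hδ₀]; positivity
  have hrt2 : t / 2 ≤ r := by nlinarith
  have hr2t : r ≤ 2 * t := by nlinarith
  have hr0 : 0 < r := lt_of_lt_of_le (by linarith) hrt2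
  have hram : 0 < r ^ (α - 1) := Real.rpow_pos_of_pos hr0 _
  have hrpow : 2 ^ (α - 1) * t ^ (α - 1) ≤ r ^ (α - 1) := by
    have h1 : (2 * t) ^ (α - 1) ≤ r ^ (α - 1) :=
      Real.rpow_le_rpow_of_nonpos hr0 hr2t (by linarith)
    rwa [Real.mul_rpow (by norm_num) ht0.le] at h1
  have hraα : (0:ℝ) ≤ r ^ α := (Real.rpow_pos_of_pos hr0 _).le
  -- generalize all rpow terms to opaque variables
  generalize hsg : t ^ α = s at *
  generalize hag : t ^ (α - 1) = a at *
  generalize hbg : r ^ (α - 1) = b at *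
  generalize hcg : (2:ℝ) ^ (α - 1) = c at *
  generalize hug : r ^ α = u at *
  clear hφ ht₀ htt0 hsg hag hbg hcg hug ht₀α hsle t₀ φ
  -- first term bound
  have hT1 : (1 - eta_t ^ 2) * (L * (1 - ρ * (1 + α) * u)) / r ≤ L * a := by
    have hnn : 0 ≤ 1 - eta_t ^ 2 := by
      rw [heta_t]
      nlinarith [mul_pos hx0 (show (0:ℝ) < 2 - eta0 * s by nlinarith)]
    have hnum : (1 - eta_t ^ 2) * (L * (1 - ρ * (1 + α) * u)) ≤ 2 * eta0 * s * L := by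
      have h2 : L * (1 - ρ * (1 + α) * u) ≤ L := by nlinarith [mul_nonneg (mul_nonneg hL.le hb.le) hraα]
      have h3 : 1 - eta_t ^ 2 ≤ 2 * eta0 * s := by rw [heta_t]; nlinarith
      calc (1 - eta_t ^ 2) * (L * (1 - ρ * (1 + α) * u))
          ≤ (1 - eta_t ^ 2) * L := mul_le_mul_of_nonneg_left h2 hnn
        _ ≤ 2 * eta0 * s * L := mul_le_mul_of_nonneg_right h3 hL.le
    have hd1 : (1 - eta_t ^ 2) * (L * (1 - ρ * (1 + α) * u)) / r
        ≤ (2 * eta0 * s * L) / r := by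
      exact div_le_div_of_nonneg_right hnum hr0.le
    have hd2 : (2 * eta0 * s * L) / r ≤ (2 * eta0 * s * L) / (t / 2) := by
      apply div_le_div_of_nonneg_left (by positivity) (by linarith) hrt2
    have hd3 : (2 * eta0 * s * L) / (t / 2) = 4 * eta0 * L * (s / t) := by ring
    have hd4 : s / t = a := by rw [← hta, mul_div_assoc, div_self ht0.ne', mul_one]
    have hd5 : 4 * eta0 * L * a ≤ L * a := by nlinarith [mul_pos hL htam]
    calc (1 - eta_t ^ 2) * (L * (1 - ρ * (1 + α) * u)) / r
        ≤ (2 * eta0 * s * L) / r := hd1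
      _ ≤ (2 * eta0 * s * L) / (t / 2) := hd2
      _ = 4 * eta0 * L * (s / t) := hd3
      _ = 4 * eta0 * L * a := by rw [hd4]
      _ ≤ L * a := hd5
  -- second term bound
  have hee : 1 ≤ eta_t ^ 2 * (1 + α) := by
    rw [heta_t]
    nlinarith [mul_lt_mul_of_pos_right hx4 h1α, mul_nonneg (sq_nonneg (eta0 * s)) h1α.le, sq_nonneg α]
  have hT2 : eta_t ^ 2 * (-(L * ρ * α * (1 + α) * b)) ≤ -(L * ρ * α * c * a) := by
    have hc : 0 < L * ρ * α := by positivity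
    have h1 : L * ρ * α * (c * a) ≤ L * ρ * α * b := mul_le_mul_of_nonneg_left hrpow hc.le
    have h2 : L * ρ * α * b ≤ eta_t ^ 2 * (1 + α) * (L * ρ * α * b) := by
      nlinarith [mul_pos hc hram]
    nlinarith
  have hrhs : -(L * (ρ * α * c - 1) * a) = L * a + -(L * ρ * α * c * a) := by ring
  linarith
end

section
/- Let a ∈ ℝ^d \ {0}, let δ₀ ∈ (0,1) and η ∈ (0,1) with 1 − η − δ₀ > 0, and set δ := ‖a‖δ₀ and η̃ := (1−η−δ₀)/(1+δ₀). Then for every z ∈ C_{η,δ}(a) and every s ∈ [−1,1]: (i) ‖a‖(1−δ₀) ≤ ‖a+sz‖ ≤ ‖a‖(1+δ₀); and (ii) |⟨a+sz, z⟩| ≥ η̃·‖a+sz‖·‖z‖. -/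
open Set RealInnerProductSpace

/-- **Bounds on the cone (eq_cone_bounds and eq_est_cone_s).**
For `a ≠ 0`, `δ₀, η ∈ (0,1)` with `1 − η − δ₀ > 0`, `δ = ‖a‖δ₀` and
`η̃ = (1−η−δ₀)/(1+δ₀)`, every `z ∈ C_{η,δ}(a)` and `s ∈ [−1,1]` satisfy
`‖a‖(1−δ₀) ≤ ‖a+sz‖ ≤ ‖a‖(1+δ₀)` and `|⟨a+sz, z⟩| ≥ η̃‖a+sz‖‖z‖`. -/
theorem cone_bounds {d : ℕ}
    (a : EuclideanSpace ℝ (Fin d)) (ha : a ≠ 0)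
    (δ₀ η : ℝ) (hδ₀ : δ₀ ∈ Ioo (0:ℝ) 1) (hη : η ∈ Ioo (0:ℝ) 1)
    (hηδ₀ : 0 < 1 - η - δ₀)
    (δ eta_t : ℝ) (hδ : δ = ‖a‖ * δ₀) (heta_t : eta_t = (1 - η - δ₀) / (1 + δ₀))
    (z : EuclideanSpace ℝ (Fin d))
    (hz : ‖z‖ ≤ δ ∧ (1 - η) * ‖z‖ * ‖a‖ ≤ abs ⟪a, z⟫)
    (s : ℝ) (hs : s ∈ Icc (-1:ℝ) 1) :
    (‖a‖ * (1 - δ₀) ≤ ‖a + s • z‖ ∧ ‖a + s • z‖ ≤ ‖a‖ * (1 + δ₀)) ∧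
    eta_t * ‖a + s • z‖ * ‖z‖ ≤ abs ⟪a + s • z, z⟫ := by
  obtain ⟨hz1, hz2⟩ := hz
  obtain ⟨hd0, hd1⟩ := hδ₀
  obtain ⟨he0, he1⟩ := hη
  obtain ⟨hs1, hs2⟩ := hs
  have hna : 0 < ‖a‖ := norm_pos_iff.mpr ha
  have hzn : 0 ≤ ‖z‖ := norm_nonneg z
  have habs : |s| ≤ 1 := abs_le.mpr ⟨hs1, hs2⟩
  have hsz : ‖s • z‖ ≤ ‖a‖ * δ₀ := by
    rw [norm_smul]
    calc |s| * ‖z‖ ≤ 1 * ‖z‖ := mul_le_mul_of_nonneg_right habs hzn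
      _ = ‖z‖ := one_mul _
      _ ≤ ‖a‖ * δ₀ := hδ ▸ hz1
  have hub : ‖a + s • z‖ ≤ ‖a‖ * (1 + δ₀) := by
    calc ‖a + s • z‖ ≤ ‖a‖ + ‖s • z‖ := norm_add_le _ _
      _ ≤ ‖a‖ * (1 + δ₀) := by linarith
  have hlb : ‖a‖ * (1 - δ₀) ≤ ‖a + s • z‖ := by
    have h1 : ‖a‖ ≤ ‖a + s • z‖ + ‖s • z‖ := by
      have := norm_add_le (a + s • z) (-(s • z))
      simpa using this
    linarith
  refine ⟨⟨hlb, hub⟩, ?_⟩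
  have hip : ⟪a + s • z, z⟫ = ⟪a, z⟫ + s * ‖z‖ ^ 2 := by
    rw [inner_add_left, real_inner_smul_left, real_inner_self_eq_norm_sq]
  have h2 : |⟪a, z⟫| - |s * ‖z‖ ^ 2| ≤ |⟪a + s • z, z⟫| := by
    rw [hip]
    have h := abs_sub_abs_le_abs_sub (⟪a, z⟫) (-(s * ‖z‖ ^ 2))
    rw [sub_neg_eq_add, abs_neg] at h
    exact h
  have h3 : |s * ‖z‖ ^ 2| ≤ ‖z‖ ^ 2 := by
    rw [abs_mul, abs_of_nonneg (by positivity : (0:ℝ) ≤ ‖z‖ ^ 2)]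
    nlinarith
  have hz1' : ‖z‖ ≤ ‖a‖ * δ₀ := hδ ▸ hz1
  have hkey : (1 - η - δ₀) * ‖a‖ * ‖z‖ ≤ |⟪a + s • z, z⟫| := by
    nlinarith
  have heq : eta_t * (1 + δ₀) = 1 - η - δ₀ := by
    rw [heta_t]; field_simp
  have het : 0 < eta_t := by
    rw [heta_t]; positivity
  calc eta_t * ‖a + s • z‖ * ‖z‖ ≤ eta_t * (‖a‖ * (1 + δ₀)) * ‖z‖ := by
        apply mul_le_mul_of_nonneg_right _ hzn
        exact mul_le_mul_of_nonneg_left hub het.le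
    _ = (1 - η - δ₀) * ‖a‖ * ‖z‖ := by nlinarith [heq]
    _ ≤ |⟪a + s • z, z⟫| := hkey
end
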